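/- Let A be a random variable on a finite set 𝒜 whose Rényi entropy of order two satisfies R(A) ≥ c, i.e., the collision probability P_c(A) = Σ_a p_A(a)² satisfies P_c(A) ≤ 2^(−c). Let 𝓕 be a universal₂ family of functions from 𝒜 to {0,1}^l and let F be uniform on 𝓕, independent of A. Then the conditional Shannon entropy satisfies H(F(A) | F) ≥ l − log₂(1 + 2^(l−c)) ≥ l − 2^(l−c)/ln 2. -/

import Mathlib

open Finset Real

open Finset Real

lemma jensen_log {ι : Type*} (t : Finset ι) (w x : ι → ℝ)
    (hw : ∀ i ∈ t, 0 ≤ w i) (hw1 : ∑ i ∈ t, w i = 1) (hx : ∀ i ∈ t, 0 < x i) :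
    ∑ i ∈ t, w i * Real.log (x i) ≤ Real.log (∑ i ∈ t, w i * x i) := by
  have := strictConcaveOn_log_Ioi.concaveOn.le_map_sum hw hw1 (p := x) (fun i hi => hx i hi)
  simpa [smul_eq_mul] using this

/-- Shannon ≥ Rényi₂ for a distribution. -/
lemma renyi_le_shannon {β : Type*} [Fintype β] (q : β → ℝ)
    (hq0 : ∀ b, 0 ≤ q b) (hq1 : ∑ b, q b = 1) :
    -Real.logb 2 (∑ b, (q b) ^ 2) ≤ -∑ b, q b * Real.logb 2 (q b) := by
  set T : Finset β := Finset.univ.filter (fun b => 0 < q b) with hT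
  have hmemT : ∀ b, b ∈ T ↔ 0 < q b := by intro b; simp [hT]
  have hzero : ∀ b ∉ T, q b = 0 := by
    intro b hb
    have := (hmemT b).not.mp hb
    exact le_antisymm (not_lt.mp this) (hq0 b)
  have hsumT : ∑ b ∈ T, q b = 1 := by
    rw [← hq1]
    exact Finset.sum_subset (Finset.subset_univ T) (fun b _ hb => hzero b hb)
  have hsqT : ∑ b ∈ T, (q b) ^ 2 = ∑ b, (q b) ^ 2 := by
    exact Finset.sum_subset (Finset.subset_univ T) (fun b _ hb => by rw [hzero b hb]; ring)
  have hkey : ∑ b ∈ T, q b * Real.log (q b) ≤ Real.log (∑ b, (q b) ^ 2) := by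
    rw [← hsqT]
    have := jensen_log T q q (fun b hb => (hq0 b)) hsumT (fun b hb => (hmemT b).mp hb)
    calc ∑ b ∈ T, q b * Real.log (q b) ≤ Real.log (∑ b ∈ T, q b * q b) := this
      _ = Real.log (∑ b ∈ T, (q b) ^ 2) := by congr 1; exact Finset.sum_congr rfl (fun b _ => (sq (q b)).symm)
  have hfull : ∑ b, q b * Real.log (q b) = ∑ b ∈ T, q b * Real.log (q b) := by
    refine (Finset.sum_subset (Finset.subset_univ T) (fun b _ hb => by rw [hzero b]; ring; exact hb)).symm
  have hlog2 : (0:ℝ) < Real.log 2 := Real.log_pos one_lt_two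
  have : ∑ b, q b * Real.logb 2 (q b) = (∑ b, q b * Real.log (q b)) / Real.log 2 := by
    rw [Finset.sum_div]
    exact Finset.sum_congr rfl (fun b _ => by rw [Real.logb]; ring)
  rw [this, Real.logb, neg_le_neg_iff, div_le_div_iff_of_pos_right hlog2] at *
  rw [hfull]
  exact hkey

lemma count_lemma {𝒜 : Type*} [Fintype 𝒜] [DecidableEq 𝒜]
    (l : ℕ) (c : ℝ) (p : 𝒜 → ℝ) (hp0 : ∀ a, 0 ≤ p a) (hp1 : ∑ a, p a = 1)
    (hcoll : ∑ a, (p a) ^ 2 ≤ (2 : ℝ) ^ (-c))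
    (𝓕 : Finset (𝒜 → (Fin l → Bool))) (h𝓕 : 𝓕.Nonempty)
    (huniv : ∀ a₀ a₁ : 𝒜, a₀ ≠ a₁ →
      ((𝓕.filter (fun f => f a₀ = f a₁)).card : ℝ) / (𝓕.card : ℝ) ≤ 1 / 2 ^ l) :
    ∑ f ∈ 𝓕, ∑ b : Fin l → Bool, (∑ a ∈ Finset.univ.filter (fun a => f a = b), p a) ^ 2
      ≤ (𝓕.card : ℝ) * ((2:ℝ) ^ (-c) + 1 / 2 ^ l) := by
  have hNpos : (0:ℝ) < 𝓕.card := by exact_mod_cast Finset.card_pos.mpr h𝓕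
  -- Step 1: rewrite the per-f collision probability
  have step1 : ∀ f : 𝒜 → (Fin l → Bool),
      ∑ b : Fin l → Bool, (∑ a ∈ Finset.univ.filter (fun a => f a = b), p a) ^ 2
      = ∑ a₀, ∑ a₁ ∈ Finset.univ.filter (fun a₁ => f a₁ = f a₀), p a₀ * p a₁ := by
    intro f
    have : ∀ b : Fin l → Bool, (∑ a ∈ Finset.univ.filter (fun a => f a = b), p a) ^ 2
        = ∑ a₀ ∈ Finset.univ.filter (fun a => f a = b),
            ∑ a₁ ∈ Finset.univ.filter (fun a₁ => f a₁ = f a₀), p a₀ * p a₁ := by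
      intro b
      rw [sq, Finset.sum_mul_sum]
      refine Finset.sum_congr rfl (fun a₀ ha₀ => ?_)
      have hb : f a₀ = b := (Finset.mem_filter.mp ha₀).2
      refine Finset.sum_congr ?_ (fun _ _ => rfl)
      ext a₁; simp [hb]
    rw [Finset.sum_congr rfl (fun b _ => this b)]
    exact Finset.sum_fiberwise Finset.univ f _
  rw [Finset.sum_congr rfl (fun f _ => step1 f), Finset.sum_comm]
  -- Step 2: for each a₀, swap sums over f and a₁
  have step2 : ∀ a₀ : 𝒜,
      ∑ f ∈ 𝓕, ∑ a₁ ∈ Finset.univ.filter (fun a₁ => f a₁ = f a₀), p a₀ * p a₁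
      = ∑ a₁, ((𝓕.filter (fun f => f a₁ = f a₀)).card : ℝ) * (p a₀ * p a₁) := by
    intro a₀
    have : ∀ f : 𝒜 → (Fin l → Bool),
        ∑ a₁ ∈ Finset.univ.filter (fun a₁ => f a₁ = f a₀), p a₀ * p a₁
        = ∑ a₁ : 𝒜, if f a₁ = f a₀ then p a₀ * p a₁ else 0 := fun f =>
      (Finset.sum_filter _ _)
    rw [Finset.sum_congr rfl (fun f _ => this f), Finset.sum_comm]
    refine Finset.sum_congr rfl (fun a₁ _ => ?_)
    rw [← Finset.sum_filter, Finset.sum_const, nsmul_eq_mul]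
  rw [Finset.sum_congr rfl (fun a₀ _ => step2 a₀)]
  -- Step 3: bound
  have hbound : ∀ a₀ a₁ : 𝒜,
      ((𝓕.filter (fun f => f a₁ = f a₀)).card : ℝ) * (p a₀ * p a₁)
      ≤ (𝓕.card : ℝ) / 2 ^ l * (p a₀ * p a₁)
        + (if a₁ = a₀ then (𝓕.card : ℝ) * (p a₀ * p a₁) else 0) := by
    intro a₀ a₁
    have h2l : (0:ℝ) < 2 ^ l := by positivity
    by_cases h : a₁ = a₀
    · subst h
      rw [if_pos rfl]
      have hle : ((𝓕.filter (fun f => f a₁ = f a₁)).card : ℝ) ≤ (𝓕.card : ℝ) := by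
        exact_mod_cast Finset.card_filter_le _ _
      have hpos : 0 ≤ p a₁ * p a₁ := mul_nonneg (hp0 a₁) (hp0 a₁)
      have h0 : (0:ℝ) ≤ (𝓕.card : ℝ) / 2 ^ l * (p a₁ * p a₁) := by positivity
      exact le_add_of_nonneg_of_le h0 (mul_le_mul_of_nonneg_right hle hpos)
    · rw [if_neg h, add_zero]
      have := huniv a₁ a₀ h
      have hc : ((𝓕.filter (fun f => f a₁ = f a₀)).card : ℝ) ≤ (𝓕.card : ℝ) / 2 ^ l := by
        rw [div_le_div_iff₀ hNpos h2l] at this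
        rw [le_div_iff₀ h2l]
        linarith
      exact mul_le_mul_of_nonneg_right hc (mul_nonneg (hp0 a₀) (hp0 a₁))
  calc ∑ a₀, ∑ a₁, ((𝓕.filter (fun f => f a₁ = f a₀)).card : ℝ) * (p a₀ * p a₁)
      ≤ ∑ a₀, ∑ a₁, ((𝓕.card : ℝ) / 2 ^ l * (p a₀ * p a₁)
        + (if a₁ = a₀ then (𝓕.card : ℝ) * (p a₀ * p a₁) else 0)) :=
        Finset.sum_le_sum (fun a₀ _ => Finset.sum_le_sum (fun a₁ _ => hbound a₀ a₁))
    _ = (𝓕.card : ℝ) / 2 ^ l * ((∑ a, p a) * (∑ a, p a)) + (𝓕.card : ℝ) * ∑ a, (p a)^2 := by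
        simp only [Finset.sum_add_distrib]
        congr 1
        · rw [Finset.sum_mul_sum, Finset.mul_sum]
          exact Finset.sum_congr rfl fun a₀ _ => by rw [Finset.mul_sum]
        · rw [Finset.mul_sum]
          exact Finset.sum_congr rfl fun a₀ _ => by simp [sq]
    _ ≤ (𝓕.card : ℝ) / 2 ^ l * 1 + (𝓕.card : ℝ) * (2:ℝ) ^ (-c) := by
        rw [hp1, one_mul]
        exact add_le_add_right (mul_le_mul_of_nonneg_left hcoll (le_of_lt hNpos)) _
    _ = (𝓕.card : ℝ) * ((2:ℝ) ^ (-c) + 1 / 2 ^ l) := by ring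

/-- Shannon entropy (in bits) of a distribution on a finite type. -/
noncomputable def shannonEntropy {β : Type*} [Fintype β] (q : β → ℝ) : ℝ :=
  -∑ b, q b * Real.logb 2 (q b)

/-- Privacy amplification (Bennett–Brassard–Crépeau–Maurer, Corollary 4):
if the Rényi entropy of order two of `A` is at least `c` (i.e. its collision
probability is at most `2 ^ (-c)`) and `𝓕` is a universal₂ family of hash
functions into `l`-bit strings, then the conditional Shannon entropy of `F(A)`
given a uniformly chosen `F ∈ 𝓕` (independent of `A`) is at least
`l - log₂ (1 + 2 ^ (l - c)) ≥ l - 2 ^ (l - c) / ln 2`. -/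
theorem privacy_amplification {𝒜 : Type*} [Fintype 𝒜] [DecidableEq 𝒜]
    (l : ℕ) (c : ℝ)
    (p : 𝒜 → ℝ) (hp0 : ∀ a, 0 ≤ p a) (hp1 : ∑ a, p a = 1)
    (hcoll : ∑ a, (p a) ^ 2 ≤ (2 : ℝ) ^ (-c))
    (𝓕 : Finset (𝒜 → (Fin l → Bool))) (h𝓕 : 𝓕.Nonempty)
    (huniv : ∀ a₀ a₁ : 𝒜, a₀ ≠ a₁ →
      ((𝓕.filter (fun f => f a₀ = f a₁)).card : ℝ) / (𝓕.card : ℝ) ≤ 1 / 2 ^ l) :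
    ((l : ℝ) - Real.logb 2 (1 + (2 : ℝ) ^ ((l : ℝ) - c)) ≤
      (𝓕.card : ℝ)⁻¹ * ∑ f ∈ 𝓕,
        shannonEntropy (fun b : Fin l → Bool =>
          ∑ a ∈ Finset.univ.filter (fun a => f a = b), p a)) ∧
    ((l : ℝ) - (2 : ℝ) ^ ((l : ℝ) - c) / Real.log 2 ≤
      (l : ℝ) - Real.logb 2 (1 + (2 : ℝ) ^ ((l : ℝ) - c))) := by
  have hlog2 : (0:ℝ) < Real.log 2 := Real.log_pos one_lt_two
  have hx0 : (0:ℝ) ≤ (2:ℝ) ^ ((l:ℝ) - c) := le_of_lt (Real.rpow_pos_of_pos two_pos _)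
  constructor
  · -- main inequality
    set q : (𝒜 → (Fin l → Bool)) → (Fin l → Bool) → ℝ :=
      fun f b => ∑ a ∈ Finset.univ.filter (fun a => f a = b), p a with hq
    set P : (𝒜 → (Fin l → Bool)) → ℝ := fun f => ∑ b, (q f b) ^ 2 with hP
    have hNpos : (0:ℝ) < 𝓕.card := by exact_mod_cast Finset.card_pos.mpr h𝓕
    have hq0 : ∀ f b, 0 ≤ q f b := fun f b => Finset.sum_nonneg (fun a _ => hp0 a)
    have hq1 : ∀ f, ∑ b, q f b = 1 := by
      intro f
      rw [hq]
      simpa using (Finset.sum_fiberwise Finset.univ f p).trans hp1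
    have hPpos : ∀ f, 0 < P f := by
      intro f
      obtain ⟨b, -, hb⟩ := Finset.exists_ne_zero_of_sum_ne_zero
        (by rw [hq1 f]; norm_num : ∑ b, q f b ≠ 0)
      exact Finset.sum_pos' (fun b _ => sq_nonneg _)
        ⟨b, Finset.mem_univ b, by positivity⟩
    -- Rényi ≤ Shannon for each f
    have hRS : ∀ f ∈ 𝓕, -Real.logb 2 (P f) ≤ shannonEntropy (q f) := by
      intro f _
      exact renyi_le_shannon (q f) (hq0 f) (hq1 f)
    -- Jensen over 𝓕
    have hsumw : ∑ _f ∈ 𝓕, (𝓕.card : ℝ)⁻¹ = 1 := by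
      rw [Finset.sum_const, nsmul_eq_mul, mul_inv_cancel₀ (ne_of_gt hNpos)]
    have hJ : ∑ f ∈ 𝓕, (𝓕.card : ℝ)⁻¹ * Real.log (P f)
        ≤ Real.log (∑ f ∈ 𝓕, (𝓕.card : ℝ)⁻¹ * P f) :=
      jensen_log 𝓕 _ P (fun f _ => by positivity) hsumw (fun f _ => hPpos f)
    -- average collision probability bound
    have havg : ∑ f ∈ 𝓕, (𝓕.card : ℝ)⁻¹ * P f ≤ (2:ℝ) ^ (-c) + 1 / 2 ^ l := by
      rw [← Finset.mul_sum]
      have := count_lemma l c p hp0 hp1 hcoll 𝓕 h𝓕 huniv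
      rw [inv_mul_le_iff₀ hNpos]
      exact this
    have havgpos : 0 < ∑ f ∈ 𝓕, (𝓕.card : ℝ)⁻¹ * P f :=
      Finset.sum_pos (fun f _ => mul_pos (by positivity) (hPpos f)) h𝓕
    -- identify the bound
    have h2lr : (1:ℝ) / 2 ^ l = (2:ℝ) ^ (-(l:ℝ)) := by
      rw [Real.rpow_neg (by norm_num : (0:ℝ) ≤ 2), Real.rpow_natCast, one_div]
    have hB : (2:ℝ) ^ (-c) + 1 / 2 ^ l
        = (2:ℝ) ^ (-(l:ℝ)) * (1 + (2:ℝ) ^ ((l:ℝ) - c)) := by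
      rw [h2lr, mul_add, mul_one, ← Real.rpow_add two_pos]
      have he : -(l:ℝ) + ((l:ℝ) - c) = -c := by ring
      rw [he, add_comm]
    have hBlog : -Real.logb 2 ((2:ℝ) ^ (-c) + 1 / 2 ^ l)
        = (l:ℝ) - Real.logb 2 (1 + (2:ℝ) ^ ((l:ℝ) - c)) := by
      rw [hB, Real.logb_mul (by positivity) (by positivity),
        Real.logb_rpow two_pos (by norm_num)]
      ring
    -- chain everything
    have hmono : -Real.logb 2 ((2:ℝ) ^ (-c) + 1 / 2 ^ l)
        ≤ -Real.logb 2 (∑ f ∈ 𝓕, (𝓕.card : ℝ)⁻¹ * P f) := by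
      have := (Real.logb_le_logb one_lt_two havgpos (by positivity)).mpr havg
      linarith
    have hchain : -Real.logb 2 (∑ f ∈ 𝓕, (𝓕.card : ℝ)⁻¹ * P f)
        ≤ (𝓕.card : ℝ)⁻¹ * ∑ f ∈ 𝓕, shannonEntropy (q f) := by
      have h1 : -Real.logb 2 (∑ f ∈ 𝓕, (𝓕.card : ℝ)⁻¹ * P f)
          ≤ ∑ f ∈ 𝓕, (𝓕.card : ℝ)⁻¹ * (-Real.logb 2 (P f)) := by
        have he : ∀ f : 𝒜 → (Fin l → Bool), (𝓕.card : ℝ)⁻¹ * (-Real.logb 2 (P f))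
            = -((𝓕.card : ℝ)⁻¹ * Real.log (P f) / Real.log 2) := fun f => by
          rw [Real.logb]; ring
        rw [Finset.sum_congr rfl (fun f _ => he f), Finset.sum_neg_distrib,
          ← Finset.sum_div, Real.logb, neg_le_neg_iff]
        exact (div_le_div_iff_of_pos_right hlog2).mpr hJ
      have h2 : ∑ f ∈ 𝓕, (𝓕.card : ℝ)⁻¹ * (-Real.logb 2 (P f))
          ≤ ∑ f ∈ 𝓕, (𝓕.card : ℝ)⁻¹ * shannonEntropy (q f) :=
        Finset.sum_le_sum fun f hf =>
          mul_le_mul_of_nonneg_left (hRS f hf) (by positivity)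
      rw [Finset.mul_sum]
      exact h1.trans h2
    calc (l : ℝ) - Real.logb 2 (1 + (2 : ℝ) ^ ((l : ℝ) - c))
        = -Real.logb 2 ((2:ℝ) ^ (-c) + 1 / 2 ^ l) := hBlog.symm
      _ ≤ -Real.logb 2 (∑ f ∈ 𝓕, (𝓕.card : ℝ)⁻¹ * P f) := hmono
      _ ≤ (𝓕.card : ℝ)⁻¹ * ∑ f ∈ 𝓕, shannonEntropy (q f) := hchain
  · -- easy inequality: logb 2 (1+x) ≤ x / log 2
    have h1 : Real.log (1 + (2:ℝ) ^ ((l:ℝ) - c)) ≤ (2:ℝ) ^ ((l:ℝ) - c) := by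
      have := Real.log_le_sub_one_of_pos (by positivity : (0:ℝ) < 1 + (2:ℝ) ^ ((l:ℝ) - c))
      linarith
    have h2 : Real.logb 2 (1 + (2:ℝ) ^ ((l:ℝ) - c)) ≤ (2:ℝ) ^ ((l:ℝ) - c) / Real.log 2 := by
      rw [Real.logb]
      exact (div_le_div_iff_of_pos_right hlog2).mpr h1
    linarith
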